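/- If (M_k)_{k∈ℕ} is a sequence of sets in 𝓜', then ⋃_{k∈ℕ} M_k belongs to 𝓜'; hence 𝓜' is a σ-ideal of subsets of ℝ. -/

import Mathlib

open MeasureTheory Filter

/-- `S ⊆ ℝ` is an interval. -/
def IsIntervalSet (S : Set ℝ) : Prop := S.OrdConnected

/-- A set `M ⊆ ℝ` is microscopic if for each `ε > 0` there is a sequence of intervals
`(J n)` covering `M` with `|J n| ≤ ε ^ (n + 1)` for each `n`. -/
def Microscopic (M : Set ℝ) : Prop :=
  ∀ ε : ℝ, 0 < ε → ∃ J : ℕ → Set ℝ,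
    (∀ n, IsIntervalSet (J n)) ∧ M ⊆ (⋃ n, J n) ∧
      ∀ n, volume (J n) ≤ ENNReal.ofReal (ε ^ (n + 1))

/-- `A ⊆ ℕ` has asymptotic density zero. -/
def DensityZero (A : Set ℕ) : Prop :=
  Tendsto (fun j : ℕ => ((A ∩ Set.Iic j).ncard : ℝ) / ((j : ℝ) + 1)) atTop (nhds 0)

/-- A set `M ⊆ ℝ` belongs to `𝓜'` if for every `ε > 0` there are `D ⊆ ℕ` of asymptotic
density zero and intervals `(J d)_{d ∈ D}` covering `M` with `|J d| ≤ ε ^ (d + 1)`. -/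
def MPrime (M : Set ℝ) : Prop :=
  ∀ ε : ℝ, 0 < ε → ∃ D : Set ℕ, DensityZero D ∧ ∃ J : ℕ → Set ℝ,
    (∀ d ∈ D, IsIntervalSet (J d)) ∧ M ⊆ (⋃ d ∈ D, J d) ∧
      ∀ d ∈ D, volume (J d) ≤ ENNReal.ofReal (ε ^ (d + 1))

lemma aux_inj (k k' d d' : ℕ) (h : 2^(k+1)*(2*d+1) = 2^(k'+1)*(2*d'+1)) : k = k' ∧ d = d' := by
  have key : ∀ k k' d d' : ℕ, k ≤ k' → 2^(k+1)*(2*d+1) = 2^(k'+1)*(2*d'+1) → k = k' ∧ d = d' := by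
    intro k k' d d' hle h
    have hpow : 2^(k+1) * (2*d+1) = 2^(k+1) * (2^(k'-k) * (2*d'+1)) := by
      rw [h, ← mul_assoc, ← pow_add]
      congr 2
      omega
    have h2 : 2*d+1 = 2^(k'-k)*(2*d'+1) := Nat.eq_of_mul_eq_mul_left (by positivity) hpow
    rcases Nat.eq_zero_or_pos (k'-k) with h0 | h0
    · rw [h0, pow_zero, one_mul] at h2
      omega
    · exfalso
      have hdvd : 2 ∣ 2^(k'-k) := dvd_pow_self 2 h0.ne'
      have : 2 ∣ 2^(k'-k)*(2*d'+1) := hdvd.mul_right _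
      omega
  rcases le_total k k' with hle | hle
  · exact key _ _ _ _ hle h
  · obtain ⟨h1, h2⟩ := key _ _ _ _ hle h.symm
    exact ⟨h1.symm, h2.symm⟩

lemma aux_geom (a n : ℕ) : (∑ k ∈ Finset.Ico a (a+n), ((1:ℝ)/2)^(k+1)) = (1/2)^a - (1/2)^(a+n) := by
  induction n with
  | zero => simp
  | succ n ih =>
    rw [show a + (n+1) = (a+n) + 1 by omega, Finset.sum_Ico_succ_top (by omega), ih,
      pow_succ]
    ring

lemma aux_tail (a b : ℕ) : (∑ k ∈ Finset.Ico a b, ((1:ℝ)/2)^(k+1)) ≤ (1/2)^a := by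
  rcases le_or_gt a b with h | h
  · have hg := aux_geom a (b - a)
    rw [Nat.add_sub_cancel' h] at hg
    have hnn : (0:ℝ) ≤ (1/2)^b := by positivity
    rw [hg]
    linarith
  · rw [Finset.Ico_eq_empty (by omega)]
    simp

open scoped Classical in
lemma aux_ncard (A : Set ℕ) (j : ℕ) :
    (A ∩ Set.Iic j).ncard = ((Finset.range (j+1)).filter (· ∈ A)).card := by
  classical
  rw [← Set.ncard_coe_finset]
  congr 1
  ext n
  simp [Nat.lt_succ_iff, and_comm]

theorem mprime_iUnion (M : ℕ → Set ℝ) (hM : ∀ k, MPrime (M k)) : MPrime (⋃ k, M k) := by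
  classical
  intro ε hε
  set ε' := min ε (1/2) with hε'def
  have hε' : 0 < ε' := lt_min hε (by norm_num)
  have hε'le : ε' ≤ ε := min_le_left _ _
  have hε'1 : ε' ≤ 1 := le_trans (min_le_right _ _) (by norm_num)
  choose D hD J hint hcov hlen using fun k => hM k (ε' ^ (2^(k+2))) (pow_pos hε' _)
  set F : ℕ → ℕ → ℕ := fun k d => 2^(k+1) * (2*d+1) - 1 with hF
  have hFadd : ∀ k d, F k d + 1 = 2^(k+1)*(2*d+1) := by
    intro k d
    have h1 : 0 < 2^(k+1)*(2*d+1) := by positivity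
    simp only [hF]
    omega
  have hFinj : ∀ {k d k' d'}, F k d = F k' d' → k = k' ∧ d = d' := by
    intro k d k' d' h
    apply aux_inj
    rw [← hFadd, ← hFadd, h]
  have hFge_d : ∀ k d, d ≤ F k d := by
    intro k d
    have h2 : 2 ≤ 2^(k+1) := by
      calc 2 = 2^1 := rfl
        _ ≤ 2^(k+1) := Nat.pow_le_pow_right (by norm_num) (by omega)
    have h3 : 2*(2*d+1) ≤ 2^(k+1)*(2*d+1) := Nat.mul_le_mul_right _ h2
    have := hFadd k d
    omega
  have hFge_k : ∀ k d, k ≤ F k d := by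
    intro k d
    have h1 : k + 1 < 2^(k+1) := Nat.lt_two_pow_self
    have h2 : 2^(k+1) ≤ 2^(k+1)*(2*d+1) := Nat.le_mul_of_pos_right _ (by omega)
    have := hFadd k d
    omega
  set Dset : Set ℕ := {n | ∃ k d, d ∈ D k ∧ F k d = n} with hDset
  set J' : ℕ → Set ℝ := fun n =>
    if h : ∃ p : ℕ × ℕ, p.2 ∈ D p.1 ∧ F p.1 p.2 = n then J h.choose.1 h.choose.2 else ∅
    with hJ'
  have hJ'eq : ∀ k d, d ∈ D k → J' (F k d) = J k d := by
    intro k d hd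
    have hex : ∃ p : ℕ × ℕ, p.2 ∈ D p.1 ∧ F p.1 p.2 = F k d := ⟨(k, d), hd, rfl⟩
    simp only [hJ', dif_pos hex]
    obtain ⟨h1, h2⟩ := hex.choose_spec
    obtain ⟨hk, hd'⟩ := hFinj h2
    rw [hk, hd']
  refine ⟨Dset, ?_, J', ?_, ?_, ?_⟩
  · -- density zero
    simp only [DensityZero]
    rw [Metric.tendsto_atTop]
    intro δ hδ
    obtain ⟨K, hK⟩ := exists_pow_lt_of_lt_one (show (0:ℝ) < δ/2 by linarith)
      (show (1:ℝ)/2 < 1 by norm_num)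
    have hsum0 : Tendsto (fun j : ℕ =>
        ∑ k ∈ Finset.range (K+1), ((D k ∩ Set.Iic j).ncard : ℝ)/((j:ℝ)+1)) atTop (nhds 0) := by
      have := tendsto_finset_sum (Finset.range (K+1)) (fun k _ => hD k)
      simpa using this
    have hev : ∀ᶠ j in atTop, (∑ k ∈ Finset.range (K+1),
        ((D k ∩ Set.Iic j).ncard : ℝ)/((j:ℝ)+1)) < δ/2 :=
      hsum0.eventually_lt_const (show (0:ℝ) < δ/2 by linarith)
    rw [eventually_atTop] at hev
    obtain ⟨N, hN⟩ := hev
    refine ⟨max N K, fun j hj => ?_⟩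
    have hjN : N ≤ j := le_trans (le_max_left _ _) hj
    have hjK : K ≤ j := le_trans (le_max_right _ _) hj
    have hjpos : (0:ℝ) < (j:ℝ)+1 := by positivity
    rw [Real.dist_eq, sub_zero, abs_of_nonneg (by positivity)]
    -- counting bound
    set T : ℕ → Finset ℕ := fun k =>
      (Finset.range (j+1)).filter (fun n => ∃ d, d ∈ D k ∧ F k d = n) with hT
    have hsub : (Finset.range (j+1)).filter (· ∈ Dset) ⊆
        (Finset.range (j+1)).biUnion T := by
      intro n hn
      simp only [Finset.mem_filter, Finset.mem_range, hDset, Set.mem_setOf_eq] at hn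
      obtain ⟨hnj, k, d, hd, hfd⟩ := hn
      simp only [Finset.mem_biUnion, hT, Finset.mem_filter, Finset.mem_range]
      exact ⟨k, by have := hFge_k k d; omega, hnj, d, hd, hfd⟩
    have hcard1 : ((Finset.range (j+1)).filter (· ∈ Dset)).card ≤
        ∑ k ∈ Finset.range (j+1), (T k).card :=
      le_trans (Finset.card_le_card hsub) Finset.card_biUnion_le
    have hTa : ∀ k, (T k).card ≤ (D k ∩ Set.Iic j).ncard := by
      intro k
      rw [aux_ncard]
      have hs : T k ⊆ Finset.image (F k) ((Finset.range (j+1)).filter (· ∈ D k)) := by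
        intro n hn
        simp only [hT, Finset.mem_filter, Finset.mem_range] at hn
        obtain ⟨hnj, d, hd, hfd⟩ := hn
        refine Finset.mem_image.2 ⟨d, Finset.mem_filter.2 ⟨Finset.mem_range.2 ?_, hd⟩, hfd⟩
        have := hFge_d k d
        omega
      exact le_trans (Finset.card_le_card hs) Finset.card_image_le
    have hTb : ∀ k, (T k).card ≤ (j+1)/2^(k+1) := by
      intro k
      have hs : T k ⊆ Finset.image (F k) (Finset.range ((j+1)/2^(k+1))) := by
        intro n hn
        simp only [hT, Finset.mem_filter, Finset.mem_range] at hn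
        obtain ⟨hnj, d, hd, hfd⟩ := hn
        refine Finset.mem_image.2 ⟨d, Finset.mem_range.2 ?_, hfd⟩
        have hp : 0 < 2^(k+1) := Nat.pow_pos (by norm_num)
        have hFd := hFadd k d
        have h1 : 2^(k+1)*(2*d+1) ≤ j+1 := by omega
        have h2 : (d+1) * 2^(k+1) ≤ j+1 :=
          le_trans (Nat.mul_le_mul_right _ (by omega))
            (le_trans (le_of_eq (Nat.mul_comm _ _)) h1)
        have h3 : d + 1 ≤ (j+1)/2^(k+1) := (Nat.le_div_iff_mul_le hp).2 h2
        omega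
      calc (T k).card ≤ (Finset.image (F k) (Finset.range ((j+1)/2^(k+1)))).card :=
            Finset.card_le_card hs
        _ ≤ (Finset.range ((j+1)/2^(k+1))).card := Finset.card_image_le
        _ = (j+1)/2^(k+1) := Finset.card_range _
    have hsplit : ∑ k ∈ Finset.range (j+1), ((T k).card : ℝ) =
        (∑ k ∈ Finset.range (K+1), ((T k).card : ℝ)) +
        ∑ k ∈ Finset.Ico (K+1) (j+1), ((T k).card : ℝ) := by
      rw [Finset.range_eq_Ico, Finset.range_eq_Ico]
      exact (Finset.sum_Ico_consecutive (fun k => ((T k).card : ℝ)) (m := 0) (n := K+1) (k := j+1) (Nat.zero_le _) (by omega)).symm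
    have hbound1 : (∑ k ∈ Finset.range (K+1), ((T k).card : ℝ)) ≤
        ∑ k ∈ Finset.range (K+1), ((D k ∩ Set.Iic j).ncard : ℝ) := by
      apply Finset.sum_le_sum
      intro k _
      exact_mod_cast hTa k
    have hbound2 : (∑ k ∈ Finset.Ico (K+1) (j+1), ((T k).card : ℝ)) ≤
        ((j:ℝ)+1) * (1/2)^(K+1) := by
      calc (∑ k ∈ Finset.Ico (K+1) (j+1), ((T k).card : ℝ))
          ≤ ∑ k ∈ Finset.Ico (K+1) (j+1), ((j:ℝ)+1) * (1/2)^(k+1) := by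
            apply Finset.sum_le_sum
            intro k _
            calc ((T k).card : ℝ) ≤ (((j+1)/2^(k+1) : ℕ) : ℝ) := by exact_mod_cast hTb k
              _ ≤ ((j:ℝ)+1) / (2:ℝ)^(k+1) := by
                  have h := Nat.cast_div_le (α := ℝ) (m := j+1) (n := 2^(k+1))
                  push_cast at h
                  exact h
              _ = ((j:ℝ)+1) * (1/2)^(k+1) := by
                  rw [div_pow, one_pow]
                  ring
        _ = ((j:ℝ)+1) * ∑ k ∈ Finset.Ico (K+1) (j+1), ((1:ℝ)/2)^(k+1) := by
            rw [Finset.mul_sum]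
        _ ≤ ((j:ℝ)+1) * (1/2)^(K+1) := by
            apply mul_le_mul_of_nonneg_left (aux_tail _ _) (by positivity)
    have hcount : ((Dset ∩ Set.Iic j).ncard : ℝ) ≤
        (∑ k ∈ Finset.range (K+1), ((D k ∩ Set.Iic j).ncard : ℝ)) +
        ((j:ℝ)+1) * (1/2)^(K+1) := by
      rw [aux_ncard]
      calc (((Finset.range (j+1)).filter (· ∈ Dset)).card : ℝ)
          ≤ ∑ k ∈ Finset.range (j+1), ((T k).card : ℝ) := by exact_mod_cast hcard1
        _ = _ := hsplit
        _ ≤ _ := by linarith [hbound1, hbound2]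
    have h1 : (∑ k ∈ Finset.range (K+1), ((D k ∩ Set.Iic j).ncard : ℝ))/((j:ℝ)+1) < δ/2 := by
      rw [Finset.sum_div]
      exact hN j hjN
    have h2 : ((1:ℝ)/2)^(K+1) < δ/2 :=
      lt_of_le_of_lt (pow_le_pow_of_le_one (by norm_num) (by norm_num) (by omega)) hK
    calc ((Dset ∩ Set.Iic j).ncard : ℝ)/((j:ℝ)+1)
        ≤ ((∑ k ∈ Finset.range (K+1), ((D k ∩ Set.Iic j).ncard : ℝ)) +
          ((j:ℝ)+1) * (1/2)^(K+1))/((j:ℝ)+1) := by gcongr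
      _ = (∑ k ∈ Finset.range (K+1), ((D k ∩ Set.Iic j).ncard : ℝ))/((j:ℝ)+1)
          + (1/2)^(K+1) := by
          rw [add_div, mul_comm, mul_div_assoc, div_self hjpos.ne', mul_one]
      _ < δ/2 + δ/2 := by linarith
      _ = δ := by ring
  · rintro n ⟨k, d, hd, rfl⟩
    rw [hJ'eq k d hd]
    exact hint k d hd
  · rintro x hx
    simp only [Set.mem_iUnion] at hx
    obtain ⟨k, hxk⟩ := hx
    have hx2 := hcov k hxk
    simp only [Set.mem_iUnion] at hx2
    obtain ⟨d, hd, hxd⟩ := hx2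
    refine Set.mem_iUnion.2 ⟨F k d, Set.mem_iUnion.2 ⟨⟨k, d, hd, rfl⟩, ?_⟩⟩
    rw [hJ'eq k d hd]
    exact hxd
  · rintro n ⟨k, d, hd, rfl⟩
    rw [hJ'eq k d hd]
    refine le_trans (hlen k d hd) (ENNReal.ofReal_le_ofReal ?_)
    rw [← pow_mul]
    calc ε' ^ (2^(k+2) * (d+1))
        ≤ ε' ^ (F k d + 1) := by
          apply pow_le_pow_of_le_one hε'.le hε'1
          rw [hFadd]
          calc 2^(k+1)*(2*d+1) ≤ 2^(k+1)*(2*(d+1)) := Nat.mul_le_mul_left _ (by omega)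
            _ = 2^(k+2)*(d+1) := by ring
      _ ≤ ε ^ (F k d + 1) := pow_le_pow_left₀ hε'.le hε'le _
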